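/- The language L over {a, b} consisting of all words with an equal number of a's and b's is not a visibly pushdown language for any partition of the alphabet {a, b} into call, internal, and response letters. -/

import Mathlib

inductive VKind | call | internal | response
deriving DecidableEq

/-- A (nondeterministic) visibly pushdown automaton over alphabet `A`
partitioned by `kind` into call, internal and response letters. -/
structure VPA (A : Type) (kind : A → VKind) where
  Q : Type
  Γ : Type
  [finQ : Fintype Q]
  [finΓ : Fintype Γ]
  init : Q
  accept : Set Q
  /-- transitions on call letters: push one symbol, do not inspect the stack -/
  δc : Q → A → Set (Q × Γ)
  /-- transitions on internal letters: do not inspect or modify the stack -/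
  δi : Q → A → Set Q
  /-- transitions on response letters: pop the topmost stack symbol -/
  δr : Q → A → Γ → Set Q
  /-- transitions on response letters read on the empty stack (bottom symbol) -/
  δb : Q → A → Set Q

namespace VPA

variable {A : Type} {kind : A → VKind}

inductive Steps (M : VPA A kind) : M.Q × List M.Γ → List A → M.Q × List M.Γ → Prop
  | nil (c) : Steps M c [] c
  | call {q s a q' γ w c} : kind a = .call → (q', γ) ∈ M.δc q a →
      Steps M (q', γ :: s) w c → Steps M (q, s) (a :: w) c
  | internal {q s a q' w c} : kind a = .internal → q' ∈ M.δi q a →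
      Steps M (q', s) w c → Steps M (q, s) (a :: w) c
  | pop {q γ s a q' w c} : kind a = .response → q' ∈ M.δr q a γ →
      Steps M (q', s) w c → Steps M (q, γ :: s) (a :: w) c
  | popEmpty {q a q' w c} : kind a = .response → q' ∈ M.δb q a →
      Steps M (q', []) w c → Steps M (q, []) (a :: w) c

/-- A VPA accepts a word if reading it from the initial state with empty stack
can end in an accepting state (with arbitrary stack contents). -/
def Accepts (M : VPA A kind) (w : List A) : Prop :=
  ∃ c : M.Q × List M.Γ, M.Steps (M.init, []) w c ∧ c.1 ∈ M.accept

end VPA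

/-- `L` is a visibly pushdown language over the partition `kind`. -/
def IsVPL {A : Type} (kind : A → VKind) (L : Set (List A)) : Prop :=
  ∃ M : VPA A kind, L = {w | M.Accepts w}

inductive AB | a | b
deriving DecidableEq

/-!
On a word in which no response letter follows a call letter, a visibly pushdown automaton only
ever pops its empty stack, so its run is that of the finite automaton obtained by forgetting the
stack. Whichever way `{a, b}` is partitioned, `xⁿ yᵐ` has this shape for `{x, y} = {a, b}` in a
suitable order, so that finite automaton would accept `xⁿ yᵐ` exactly when `n = m`, contradicting
the Myhill–Nerode theorem.
-/

open List

theorem Language.not_isRegular_of_replicate_append_mem_iff {α : Type*} {L : Language α}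
    {x y : α} (hL : ∀ n m, replicate n x ++ replicate m y ∈ L ↔ n = m) : ¬ L.IsRegular := by
  intro hreg
  have hinj : Function.Injective fun n => L.leftQuotient (replicate n x) := by
    intro n m (hnm : L.leftQuotient (replicate n x) = L.leftQuotient (replicate m x))
    have : replicate n y ∈ L.leftQuotient (replicate m x) := by
      rw [← hnm, mem_leftQuotient, hL]
    exact ((hL m n).1 this).symm
  exact Set.infinite_range_of_injective hinj <| hreg.finite_range_leftQuotient.subset <|
    Set.range_comp_subset_range (replicate · x) L.leftQuotient

namespace VPA

variable {A : Type}

def NoResponseAfterCall (kind : A → VKind) (w : List A) : Prop :=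
  w.Pairwise fun a b => kind a = .call → kind b ≠ .response

variable {kind : A → VKind}

theorem noResponseAfterCall_replicate_append {x y : A}
    (hxy : ¬(kind x = .call ∧ kind y = .response)) (n m : ℕ) :
    NoResponseAfterCall kind (replicate n x ++ replicate m y) := by
  simp only [NoResponseAfterCall, pairwise_append, pairwise_replicate, mem_replicate]
  refine ⟨Or.inr ?_, Or.inr ?_, ?_⟩
  · intro hx; simp [hx]
  · intro hy; simp [hy]
  · rintro _ ⟨-, rfl⟩ _ ⟨-, rfl⟩ hx hy
    exact hxy ⟨hx, hy⟩

def toNFA (M : VPA A kind) : NFA A M.Q where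
  step q a := {q' | (kind a = .call ∧ ∃ γ, (q', γ) ∈ M.δc q a) ∨
    (kind a = .internal ∧ q' ∈ M.δi q a) ∨ (kind a = .response ∧ q' ∈ M.δb q a)}
  start := {M.init}
  accept := M.accept

theorem isRegular_toNFA_accepts (M : VPA A kind) : M.toNFA.accepts.IsRegular :=
  have := M.finQ
  ⟨Set M.Q, inferInstance, M.toNFA.toDFA, NFA.toDFA_correct⟩

theorem mem_toNFA_evalFrom_cons {M : VPA A kind} {q q' : M.Q} {a : A} {w : List A} :
    q' ∈ M.toNFA.evalFrom {q} (a :: w) ↔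
      ∃ q₁ ∈ M.toNFA.step q a, q' ∈ M.toNFA.evalFrom {q₁} w := by
  rw [NFA.evalFrom_cons, NFA.stepSet_singleton, NFA.mem_evalFrom_iff_exists]

theorem exists_steps_iff_mem_toNFA_evalFrom_of_forall_ne_response {M : VPA A kind}
    {w : List A} (hw : ∀ b ∈ w, kind b ≠ .response) {q q' : M.Q} (s : List M.Γ) :
    (∃ s', M.Steps (q, s) w (q', s')) ↔ q' ∈ M.toNFA.evalFrom {q} w := by
  induction w generalizing q s with
  | nil =>
    refine ⟨fun ⟨s', h⟩ => ?_, fun h => ⟨s, h ▸ .nil _⟩⟩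
    cases h; rfl
  | cons a w ih =>
    have hw' := fun b hb => hw b (mem_cons_of_mem a hb)
    rw [mem_toNFA_evalFrom_cons]
    constructor
    · rintro ⟨s', h⟩
      cases h with
      | call ha hδ h => exact ⟨_, Or.inl ⟨ha, _, hδ⟩, (ih hw' _).1 ⟨_, h⟩⟩
      | internal ha hδ h => exact ⟨_, Or.inr (Or.inl ⟨ha, hδ⟩), (ih hw' _).1 ⟨_, h⟩⟩
      | pop ha => exact absurd ha (hw a mem_cons_self)
      | popEmpty ha => exact absurd ha (hw a mem_cons_self)
    · rintro ⟨q₁, ⟨ha, γ, hδ⟩ | ⟨ha, hδ⟩ | ⟨ha, -⟩, hq'⟩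
      · obtain ⟨s', h⟩ := (ih hw' (γ :: s)).2 hq'
        exact ⟨s', .call ha hδ h⟩
      · obtain ⟨s', h⟩ := (ih hw' s).2 hq'
        exact ⟨s', .internal ha hδ h⟩
      · exact absurd ha (hw a mem_cons_self)

theorem exists_steps_iff_mem_toNFA_evalFrom {M : VPA A kind} {w : List A}
    (hw : NoResponseAfterCall kind w) {q q' : M.Q} :
    (∃ s', M.Steps (q, []) w (q', s')) ↔ q' ∈ M.toNFA.evalFrom {q} w := by
  induction w generalizing q with
  | nil => exact exists_steps_iff_mem_toNFA_evalFrom_of_forall_ne_response (by simp) []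
  | cons a w ih =>
    rw [NoResponseAfterCall, pairwise_cons] at hw
    obtain ⟨hcall, hw⟩ := hw
    rw [mem_toNFA_evalFrom_cons]
    constructor
    · rintro ⟨s', h⟩
      cases h with
      | call ha hδ h =>
        exact ⟨_, Or.inl ⟨ha, _, hδ⟩,
          (exists_steps_iff_mem_toNFA_evalFrom_of_forall_ne_response
            (fun b hb => hcall b hb ha) _).1 ⟨_, h⟩⟩
      | internal ha hδ h => exact ⟨_, Or.inr (Or.inl ⟨ha, hδ⟩), (ih hw).1 ⟨_, h⟩⟩
      | popEmpty ha hδ h => exact ⟨_, Or.inr (Or.inr ⟨ha, hδ⟩), (ih hw).1 ⟨_, h⟩⟩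
    · rintro ⟨q₁, ⟨ha, γ, hδ⟩ | ⟨ha, hδ⟩ | ⟨ha, hδ⟩, hq'⟩
      · obtain ⟨s', h⟩ := (exists_steps_iff_mem_toNFA_evalFrom_of_forall_ne_response
          (fun b hb => hcall b hb ha) [γ]).2 hq'
        exact ⟨s', .call ha hδ h⟩
      · obtain ⟨s', h⟩ := (ih hw).2 hq'
        exact ⟨s', .internal ha hδ h⟩
      · obtain ⟨s', h⟩ := (ih hw).2 hq'
        exact ⟨s', .popEmpty ha hδ h⟩

theorem accepts_iff_mem_toNFA_accepts {M : VPA A kind} {w : List A}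
    (hw : NoResponseAfterCall kind w) : M.Accepts w ↔ w ∈ M.toNFA.accepts := by
  rw [NFA.mem_accepts]
  constructor
  · rintro ⟨⟨q, s⟩, h, hq⟩
    exact ⟨q, hq, (exists_steps_iff_mem_toNFA_evalFrom hw).1 ⟨s, h⟩⟩
  · rintro ⟨q, hq, h⟩
    obtain ⟨s, h⟩ := (exists_steps_iff_mem_toNFA_evalFrom hw).2 h
    exact ⟨(q, s), h, hq⟩

theorem not_forall_accepts_replicate_append_iff (M : VPA A kind) {x y : A}
    (hxy : ¬(kind x = .call ∧ kind y = .response)) :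
    ¬ ∀ n m, M.Accepts (replicate n x ++ replicate m y) ↔ n = m := fun hM =>
  Language.not_isRegular_of_replicate_append_mem_iff
    (fun n m => (accepts_iff_mem_toNFA_accepts
      (noResponseAfterCall_replicate_append hxy n m)).symm.trans (hM n m))
    M.isRegular_toNFA_accepts

end VPA

/-- The language of words over {a,b} with equally many a's and b's is not a
visibly pushdown language for any partition of the alphabet. -/
theorem equal_counts_not_VPL :
    ∀ kind : AB → VKind,
      ¬ IsVPL kind {w : List AB | w.count AB.a = w.count AB.b} := by
  rintro kind ⟨M, hM⟩
  obtain ⟨x, y, hxy, hcount⟩ : ∃ x y : AB, ¬(kind x = .call ∧ kind y = .response) ∧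
      ∀ n m, (replicate n x ++ replicate m y).count .a =
        (replicate n x ++ replicate m y).count .b ↔ n = m := by
    by_cases h : kind .a = .call ∧ kind .b = .response
    · exact ⟨.b, .a, by simp [h.2], fun n m => by simp [count_replicate, @eq_comm _ m n]⟩
    · exact ⟨.a, .b, h, fun n m => by simp [count_replicate]⟩
  refine M.not_forall_accepts_replicate_append_iff hxy fun n m => ?_
  rw [← hcount n m]
  exact (Set.ext_iff.1 hM _).symm
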